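/- Fix ρ_p > 0, h > 0, and a point X_T ∈ ℝ² with r_T = |X_T|. For each integer n ≥ 2 let R_n = √(n/(π ρ_p)) and let X_1, …, X_n be i.i.d. random points uniformly distributed on the closed disk of radius R_n centered at the origin in ℝ². Define P_i = 1 if and only if |X_i − X_T| ≥ h and |X_i − X_j| ≥ h for every j ≠ i, and let 𝒜_n be the event that X_1 and X_2 both lie in the annulus {x ∈ ℝ² : r_T + 2h ≤ |x| ≤ R_n − h} and |X_1 − X_2| > 2h. Then lim_{n→∞} Pr(P_1 = 1 and P_2 = 1 | 𝒜_n) = exp(−2π ρ_p h²). -/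

import Mathlib

/-!
On the conditioning event both guard disks `ball X₁ h`, `ball X₂ h` lie inside the disk of
radius `R_n`, are disjoint, and stay away from `X_T`; so `P₁ = P₂ = 1` exactly when each of the
other `n - 2` points avoids both guard disks. Given `(X₁, X₂)`, these are independent events of
probability `1 - 2h²/R_n² = 1 - 2πρ_p h²/n`, so the conditional probability is exactly
`(1 - 2πρ_p h²/n)^(n-2)`, which tends to `exp(-2πρ_p h²)`.
-/

open MeasureTheory ProbabilityTheory Set Real Filter

/-- The uniform probability measure on the closed disk of radius `R` centered at the
origin of the plane. -/
noncomputable def unifDisk (R : ℝ) : Measure (EuclideanSpace ℝ (Fin 2)) :=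
  (volume (Metric.closedBall (0 : EuclideanSpace ℝ (Fin 2)) R))⁻¹ •
    volume.restrict (Metric.closedBall (0 : EuclideanSpace ℝ (Fin 2)) R)

open Metric
open scoped ENNReal Topology

local notation "ℝ²" => EuclideanSpace ℝ (Fin 2)

section UniformDisk

variable {R : ℝ}

lemma isProbabilityMeasure_unifDisk (hR : 0 < R) : IsProbabilityMeasure (unifDisk R) := by
  constructor
  rw [unifDisk, Measure.smul_apply, Measure.restrict_apply_univ, smul_eq_mul,
    ENNReal.inv_mul_cancel] <;> simp [hR, pi_pos, ENNReal.mul_eq_top]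

lemma ball_subset_closedBall_zero {E : Type*} [SeminormedAddCommGroup E] {p : E} {r : ℝ}
    (hp : ‖p‖ + r ≤ R) : ball p r ⊆ closedBall 0 R :=
  ball_subset_closedBall.trans (closedBall_subset_closedBall' (by simpa [add_comm] using hp))

lemma unifDisk_ball (hR : 0 < R) {p : ℝ²} {r : ℝ} (hr : 0 ≤ r) (hp : ‖p‖ + r ≤ R) :
    unifDisk R (ball p r) = ENNReal.ofReal (r ^ 2 / R ^ 2) := by
  rw [unifDisk, Measure.smul_apply, Measure.restrict_apply measurableSet_ball,
    inter_eq_left.2 (ball_subset_closedBall_zero hp), EuclideanSpace.volume_ball_fin_two,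
    EuclideanSpace.volume_closedBall_fin_two, smul_eq_mul, ← ENNReal.ofReal_pow hr,
    ← ENNReal.ofReal_pow hR.le, ← ENNReal.ofReal_mul (by positivity),
    ← ENNReal.ofReal_mul (by positivity), ← ENNReal.ofReal_inv_of_pos (by positivity),
    ← ENNReal.ofReal_mul (by positivity)]
  congr 1
  field_simp

lemma unifDisk_setOf_le_dist_and_le_dist (hR : 0 < R) {h : ℝ} (hh : 0 ≤ h) {a b : ℝ²}
    (ha : ‖a‖ + h ≤ R) (hb : ‖b‖ + h ≤ R) (hab : 2 * h ≤ dist a b) :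
    unifDisk R {x | h ≤ dist a x ∧ h ≤ dist b x} = ENNReal.ofReal (1 - 2 * (h ^ 2 / R ^ 2)) := by
  have := isProbabilityMeasure_unifDisk hR
  have hcompl : {x | h ≤ dist a x ∧ h ≤ dist b x} = (ball a h ∪ ball b h)ᶜ := by
    ext x
    simp [dist_comm]
  rw [hcompl, prob_compl_eq_one_sub (measurableSet_ball.union measurableSet_ball),
    measure_union (ball_disjoint_ball (by linarith)) measurableSet_ball, unifDisk_ball hR hh ha,
    unifDisk_ball hR hh hb, ← ENNReal.ofReal_add (by positivity) (by positivity),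
    ← ENNReal.ofReal_one, ← ENNReal.ofReal_sub _ (by positivity), two_mul]

end UniformDisk

lemma tendsto_one_sub_div_add_two_pow (c : ℝ) :
    Tendsto (fun n : ℕ => (1 - c / (n + 2)) ^ n) atTop (𝓝 (exp (-c))) := by
  refine (Real.tendsto_one_add_pow_exp_of_tendsto (g := fun n => -c / (n + 2)) ?_).congr
    fun n => by ring
  simpa [mul_div_assoc', mul_comm] using (tendsto_natCast_div_add_atTop (2 : ℝ)).const_mul (-c)

section IndependentFamily

variable {α β : Type*} [MeasurableSpace α] [MeasurableSpace β]

lemma measurePreserving_pair_tail (μ : Measure α) [SigmaFinite μ] (n : ℕ) :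
    MeasurePreserving (fun f : Fin (n + 2) → α => ((f 0, f 1), fun j : Fin n => f j.succ.succ))
      (Measure.pi fun _ => μ) ((μ.prod μ).prod (Measure.pi fun _ => μ)) := by
  have hsplit := ((MeasurePreserving.id μ).prod
    (measurePreserving_piFinSuccAbove (fun _ : Fin (n + 1) => μ) 0)).comp
      (measurePreserving_piFinSuccAbove (fun _ : Fin (n + 2) => μ) 0)
  convert (measurePreserving_prodAssoc μ μ (Measure.pi fun _ : Fin n => μ)).symm.comp hsplit
    using 1
  rfl

lemma measurableSet_setOf_mem_and_forall_mem {Φ : Set β} (hΦ : MeasurableSet Φ)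
    {C : β → Set α} (hC : MeasurableSet {q : β × α | q.2 ∈ C q.1}) (ι : Type*) [Countable ι] :
    MeasurableSet {q : β × (ι → α) | q.1 ∈ Φ ∧ ∀ j, q.2 j ∈ C q.1} := by
  simp only [ofPred_and, ofPred_forall]
  exact (measurable_fst hΦ).inter <| .iInter fun j =>
    hC.preimage (measurable_fst.prodMk ((measurable_pi_apply j).comp measurable_snd))

lemma prod_pi_setOf_mem_and_forall_mem (ν : Measure β) [SFinite ν] (μ : Measure α) [SigmaFinite μ]
    {Φ : Set β} (hΦ : MeasurableSet Φ) {C : β → Set α}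
    (hC : MeasurableSet {q : β × α | q.2 ∈ C q.1}) {κ : ℝ≥0∞} (hκ : ∀ b ∈ Φ, μ (C b) = κ)
    (n : ℕ) :
    (ν.prod (Measure.pi fun _ : Fin n => μ)) {q | q.1 ∈ Φ ∧ ∀ j, q.2 j ∈ C q.1} = κ ^ n * ν Φ := by
  set T := {q : β × (Fin n → α) | q.1 ∈ Φ ∧ ∀ j, q.2 j ∈ C q.1}
  have hslice (b : β) :
      Measure.pi (fun _ : Fin n => μ) (Prod.mk b ⁻¹' T) = Φ.indicator (fun _ => κ ^ n) b := by
    by_cases hb : b ∈ Φ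
    · have : Prod.mk b ⁻¹' T = univ.pi fun _ => C b := by
        ext y
        simp [T, hb]
      simp [this, hb, hκ b hb]
    · simp [T, hb]
  rw [Measure.prod_apply (show MeasurableSet T from measurableSet_setOf_mem_and_forall_mem hΦ hC _),
    lintegral_congr hslice, lintegral_indicator_const hΦ]

lemma cond_forall_mem_of_iIndepFun {Ω : Type*} [MeasurableSpace Ω] {P : Measure Ω}
    {μ : Measure α} [IsProbabilityMeasure μ] {n : ℕ} {X : Fin (n + 2) → Ω → α}
    (hX : ∀ i, Measurable (X i)) (hindep : iIndepFun X P) (hlaw : ∀ i, P.map (X i) = μ)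
    {Φ : Set (α × α)} (hΦ : MeasurableSet Φ) (hΦ₀ : (μ.prod μ) Φ ≠ 0) {C : α × α → Set α}
    (hC : MeasurableSet {q : (α × α) × α | q.2 ∈ C q.1}) {κ : ℝ≥0∞}
    (hκ : ∀ p ∈ Φ, μ (C p) = κ) {A S : Set Ω} (hA : A = {ω | (X 0 ω, X 1 ω) ∈ Φ})
    (hS : ∀ ω ∈ A, ω ∈ S ↔ ∀ j : Fin n, X j.succ.succ ω ∈ C (X 0 ω, X 1 ω)) :
    P[S | A] = κ ^ n := by
  subst hA
  set Y : Ω → (α × α) × (Fin n → α) := fun ω => ((X 0 ω, X 1 ω), fun j => X j.succ.succ ω)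
  have hY : Measurable Y :=
    ((hX 0).prodMk (hX 1)).prodMk (measurable_pi_lambda _ fun j => hX j.succ.succ)
  have hlawY : P.map Y = (μ.prod μ).prod (Measure.pi fun _ => μ) := by
    have hpi := hindep.map_fun_eq_pi_map fun i => (hX i).aemeasurable
    simp only [hlaw] at hpi
    rw [← (measurePreserving_pair_tail μ n).map_eq, ← hpi,
      Measure.map_map (measurePreserving_pair_tail μ n).measurable (measurable_pi_lambda _ hX)]
    rfl
  have hT := measurableSet_setOf_mem_and_forall_mem hΦ hC (Fin n)
  have hAY : {ω | (X 0 ω, X 1 ω) ∈ Φ} = Y ⁻¹' (Φ ×ˢ univ) := by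
    ext ω
    simp [Y]
  have hAT : {ω | (X 0 ω, X 1 ω) ∈ Φ} ∩ {ω | ∀ j : Fin n, X j.succ.succ ω ∈ C (X 0 ω, X 1 ω)} =
      Y ⁻¹' {q | q.1 ∈ Φ ∧ ∀ j, q.2 j ∈ C q.1} := rfl
  have hAS : {ω | (X 0 ω, X 1 ω) ∈ Φ} ∩ S =
      {ω | (X 0 ω, X 1 ω) ∈ Φ} ∩ {ω | ∀ j : Fin n, X j.succ.succ ω ∈ C (X 0 ω, X 1 ω)} := by
    ext ω
    exact and_congr_right (hS ω)
  rw [cond_apply (hAY ▸ hY (hΦ.prod .univ)), hAS, hAT, hAY, ← Measure.map_apply hY (hΦ.prod .univ),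
    ← Measure.map_apply hY hT, hlawY, Measure.prod_prod, measure_univ, mul_one,
    prod_pi_setOf_mem_and_forall_mem _ _ hΦ hC hκ, mul_comm, mul_assoc,
    ENNReal.mul_inv_cancel hΦ₀ (measure_ne_top _ _), mul_one]

end IndependentFamily

section SeparatedPairs

def separatedAnnulusPairs (r₁ r₂ d : ℝ) : Set (ℝ² × ℝ²) :=
  {p | (r₁ ≤ ‖p.1‖ ∧ ‖p.1‖ ≤ r₂) ∧ (r₁ ≤ ‖p.2‖ ∧ ‖p.2‖ ≤ r₂) ∧ d < dist p.1 p.2}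

lemma measurableSet_separatedAnnulusPairs (r₁ r₂ d : ℝ) :
    MeasurableSet (separatedAnnulusPairs r₁ r₂ d) :=
  ((measurableSet_le measurable_const measurable_fst.norm).inter
      (measurableSet_le measurable_fst.norm measurable_const)).inter
    (((measurableSet_le measurable_const measurable_snd.norm).inter
        (measurableSet_le measurable_snd.norm measurable_const)).inter
      (measurableSet_lt measurable_const (measurable_fst.dist measurable_snd)))

lemma measurableSet_setOf_le_dist_and_le_dist (h : ℝ) :
    MeasurableSet {q : (ℝ² × ℝ²) × ℝ² | h ≤ dist q.1.1 q.2 ∧ h ≤ dist q.1.2 q.2} :=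
  (measurableSet_le measurable_const (measurable_fst.fst.dist measurable_snd)).inter
    (measurableSet_le measurable_const (measurable_fst.snd.dist measurable_snd))

lemma unifDisk_prod_separatedAnnulusPairs_ne_zero {R r h : ℝ} (hr : 0 ≤ r) (hh : 0 < h)
    (hR : r + 5 * h ≤ R) :
    ((unifDisk R).prod (unifDisk R)) (separatedAnnulusPairs (r + 2 * h) (R - h) (2 * h)) ≠ 0 := by
  have hRpos : 0 < R := by linarith
  have := isProbabilityMeasure_unifDisk hRpos
  -- The set contains the product of the `h`-balls around two antipodal points of norm `r + 3h`.
  obtain ⟨p, hp⟩ := exists_norm_eq ℝ² (show 0 ≤ r + 3 * h by linarith)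
  have hnp : ‖-p‖ = r + 3 * h := by rw [norm_neg, hp]
  have hdp : dist p (-p) = 2 * (r + 3 * h) := by
    rw [dist_eq_norm, sub_neg_eq_add, ← two_smul ℝ, norm_smul, Real.norm_two, hp]
  have norm_near {c x : ℝ²} (hx : x ∈ ball c h) : |‖x‖ - ‖c‖| < h :=
    (abs_norm_sub_norm_le x c).trans_lt (by rwa [← dist_eq_norm])
  have hsub : ball p h ×ˢ ball (-p) h ⊆ separatedAnnulusPairs (r + 2 * h) (R - h) (2 * h) := by
    rintro ⟨a, b⟩ ⟨ha, hb⟩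
    obtain ⟨ha₁, ha₂⟩ := abs_lt.1 (norm_near ha)
    obtain ⟨hb₁, hb₂⟩ := abs_lt.1 (norm_near hb)
    have := dist_triangle4 p a b (-p)
    rw [mem_ball] at ha hb
    rw [dist_comm] at ha
    refine ⟨⟨?_, ?_⟩, ⟨?_, ?_⟩, ?_⟩ <;> dsimp only <;> linarith
  refine (lt_of_lt_of_le ?_ (measure_mono hsub)).ne'
  rw [Measure.prod_prod, unifDisk_ball hRpos hh.le (by linarith),
    unifDisk_ball hRpos hh.le (by linarith)]
  exact ENNReal.mul_pos (ENNReal.ofReal_pos.2 (by positivity)).ne'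
    (ENNReal.ofReal_pos.2 (by positivity)).ne'

lemma isolated_zero_and_one_iff {E : Type*} [SeminormedAddCommGroup E] {n : ℕ} {h : ℝ}
    (hh : 0 ≤ h) {z : E} {x : Fin (n + 2) → E} (h₀ : ‖z‖ + 2 * h ≤ ‖x 0‖)
    (h₁ : ‖z‖ + 2 * h ≤ ‖x 1‖) (h₀₁ : 2 * h < dist (x 0) (x 1)) :
    ((h ≤ dist (x 0) z ∧ ∀ j : Fin (n + 2), j ≠ 0 → h ≤ dist (x 0) (x j)) ∧
        (h ≤ dist (x 1) z ∧ ∀ j : Fin (n + 2), j ≠ 1 → h ≤ dist (x 1) (x j))) ↔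
      ∀ j : Fin n, h ≤ dist (x 0) (x j.succ.succ) ∧ h ≤ dist (x 1) (x j.succ.succ) := by
  refine ⟨fun ⟨⟨_, h0⟩, _, h1⟩ j =>
    ⟨h0 _ (Fin.succ_ne_zero _), h1 _ (Fin.succ_succ_ne_one _)⟩, fun hrest => ?_⟩
  have far_z (i : Fin (n + 2)) (hi : ‖z‖ + 2 * h ≤ ‖x i‖) : h ≤ dist (x i) z := by
    rw [dist_eq_norm]
    linarith [norm_sub_norm_le (x i) z]
  have other (j : Fin (n + 2)) (hj₀ : j ≠ 0) (hj₁ : j ≠ 1) : ∃ k : Fin n, j = k.succ.succ := by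
    obtain rfl | ⟨i, rfl⟩ := Fin.eq_zero_or_eq_succ j
    · exact absurd rfl hj₀
    obtain rfl | ⟨k, rfl⟩ := Fin.eq_zero_or_eq_succ i
    · exact absurd Fin.succ_zero_eq_one hj₁
    exact ⟨k, rfl⟩
  refine ⟨⟨far_z 0 h₀, fun j hj₀ => ?_⟩, far_z 1 h₁, fun j hj₁ => ?_⟩
  · by_cases hj₁ : j = 1
    · subst hj₁
      exact h₀₁.le.trans' (by linarith)
    obtain ⟨k, rfl⟩ := other j hj₀ hj₁
    exact (hrest k).1
  · by_cases hj₀ : j = 0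
    · subst hj₀
      rw [dist_comm]
      exact h₀₁.le.trans' (by linarith)
    obtain ⟨k, rfl⟩ := other j hj₀ hj₁
    exact (hrest k).2

end SeparatedPairs

theorem stmt9_general (ρp h : ℝ) (hρp : 0 < ρp) (hh : 0 < h)
    (XT : EuclideanSpace ℝ (Fin 2)) (rT : ℝ) (hrT : rT = ‖XT‖)
    (R : ℕ → ℝ) (hR : ∀ n : ℕ, R n = Real.sqrt (n / (π * ρp)))
    (Ω : ℕ → Type) [∀ n, MeasurableSpace (Ω n)]
    (P : (n : ℕ) → Measure (Ω n))
    (X : (n : ℕ) → Fin n → Ω n → EuclideanSpace ℝ (Fin 2))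
    (hmeas : ∀ n i, Measurable (X n i))
    (hindep : ∀ n, iIndepFun (X n) (P n))
    (hlaw : ∀ n (i : Fin n), (P n).map (X n i) = unifDisk (R n)) :
    Tendsto
      (fun n : ℕ =>
        (((P (n + 2))[|{ω | (rT + 2 * h ≤ ‖X (n + 2) 0 ω‖ ∧ ‖X (n + 2) 0 ω‖ ≤ R (n + 2) - h) ∧
            (rT + 2 * h ≤ ‖X (n + 2) 1 ω‖ ∧ ‖X (n + 2) 1 ω‖ ≤ R (n + 2) - h) ∧
            2 * h < dist (X (n + 2) 0 ω) (X (n + 2) 1 ω)}])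
          {ω | (h ≤ dist (X (n + 2) 0 ω) XT ∧
              ∀ j : Fin (n + 2), j ≠ 0 → h ≤ dist (X (n + 2) 0 ω) (X (n + 2) j ω)) ∧
            (h ≤ dist (X (n + 2) 1 ω) XT ∧
              ∀ j : Fin (n + 2), j ≠ 1 → h ≤ dist (X (n + 2) 1 ω) (X (n + 2) j ω))}).toReal)
      atTop (nhds (Real.exp (-(2 * π * ρp * h ^ 2)))) := by
  subst hrT
  have hRsq (n : ℕ) : R (n + 2) ^ 2 = (n + 2) / (π * ρp) := by
    rw [hR, sq_sqrt (by positivity)]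
    push_cast
    rfl
  have hRlarge : ∀ᶠ n : ℕ in atTop, ‖XT‖ + 5 * h ≤ R (n + 2) := by
    simp_rw [hR]
    exact (tendsto_sqrt_atTop.comp ((tendsto_natCast_atTop_atTop.comp
      (tendsto_add_atTop_nat 2)).atTop_div_const (by positivity))).eventually_ge_atTop _
  refine (tendsto_one_sub_div_add_two_pow _).congr' ?_
  filter_upwards [hRlarge] with n hn
  have hRpos : 0 < R (n + 2) := by linarith [norm_nonneg XT]
  have := isProbabilityMeasure_unifDisk hRpos
  rw [cond_forall_mem_of_iIndepFun (hmeas _) (hindep (n + 2)) (hlaw _)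
      (measurableSet_separatedAnnulusPairs _ _ _)
      (unifDisk_prod_separatedAnnulusPairs_ne_zero (norm_nonneg XT) hh hn)
      (C := fun p => {x | h ≤ dist p.1 x ∧ h ≤ dist p.2 x})
      (measurableSet_setOf_le_dist_and_le_dist h)
      (fun p hp => unifDisk_setOf_le_dist_and_le_dist hRpos hh.le (by linarith [hp.1.2])
        (by linarith [hp.2.1.2]) hp.2.2.le) ?_ ?_]
  · rw [ENNReal.toReal_pow, ENNReal.toReal_ofReal, hRsq]
    · field_simp
    · have : 2 * h ^ 2 ≤ R (n + 2) ^ 2 := by nlinarith [norm_nonneg XT]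
      rw [sub_nonneg, ← mul_div_assoc, div_le_one (by positivity)]
      exact this
  · rfl
  · exact fun ω hω => isolated_zero_and_one_iff (x := fun i => X (n + 2) i ω) hh.le hω.1.1
      hω.2.1.1 hω.2.2

/-- HC-I, joint conditional.  Fix `ρ_p > 0`, `h > 0`, `X_T ∈ ℝ²` with
`r_T = |X_T|`.  For each `n ≥ 2` let `R_n = √(n/(π ρ_p))` and `X_1, …, X_n` i.i.d.
uniform on the closed disk of radius `R_n`; `P_i = 1` iff `|X_i − X_T| ≥ h` and
`|X_i − X_j| ≥ h` for every `j ≠ i`; `𝒜_n` is the event that `X_1, X_2` lie in the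
annulus `{x : r_T + 2h ≤ |x| ≤ R_n − h}` and `|X_1 − X_2| > 2h`.  Then
`Pr(P_1 = 1 ∧ P_2 = 1 | 𝒜_n) → exp(−2π ρ_p h²)`. -/
theorem stmt9 (ρp h : ℝ) (hρp : 0 < ρp) (hh : 0 < h)
    (XT : EuclideanSpace ℝ (Fin 2)) (rT : ℝ) (hrT : rT = ‖XT‖)
    (R : ℕ → ℝ) (hR : ∀ n : ℕ, R n = Real.sqrt (n / (π * ρp)))
    (Ω : ℕ → Type) [∀ n, MeasurableSpace (Ω n)]
    (P : (n : ℕ) → Measure (Ω n)) (hprob : ∀ n, IsProbabilityMeasure (P n))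
    (X : (n : ℕ) → Fin n → Ω n → EuclideanSpace ℝ (Fin 2))
    (hmeas : ∀ n i, Measurable (X n i))
    (hindep : ∀ n, iIndepFun (X n) (P n))
    (hlaw : ∀ n (i : Fin n), (P n).map (X n i) = unifDisk (R n)) :
    Tendsto
      (fun n : ℕ =>
        (((P (n + 2))[|{ω | (rT + 2 * h ≤ ‖X (n + 2) 0 ω‖ ∧ ‖X (n + 2) 0 ω‖ ≤ R (n + 2) - h) ∧
            (rT + 2 * h ≤ ‖X (n + 2) 1 ω‖ ∧ ‖X (n + 2) 1 ω‖ ≤ R (n + 2) - h) ∧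
            2 * h < dist (X (n + 2) 0 ω) (X (n + 2) 1 ω)}])
          {ω | (h ≤ dist (X (n + 2) 0 ω) XT ∧
              ∀ j : Fin (n + 2), j ≠ 0 → h ≤ dist (X (n + 2) 0 ω) (X (n + 2) j ω)) ∧
            (h ≤ dist (X (n + 2) 1 ω) XT ∧
              ∀ j : Fin (n + 2), j ≠ 1 → h ≤ dist (X (n + 2) 1 ω) (X (n + 2) j ω))}).toReal)
      atTop (nhds (Real.exp (-(2 * π * ρp * h ^ 2)))) :=
  stmt9_general ρp h hρp hh XT rT hrT R hR Ω P X hmeas hindep hlaw
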